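/- Let f(x₁,…,x_m) = ∏_{i=1}^m (x_i^{β_i - i + 1} - x_i^{β_i - i - 1}) in Laurent polynomials, and consider the m×m Laurent-polynomial matrix M with M_{i,j} = x_i^{β_i - i + j} - x_i^{β_i - i - j}. Then det M = x^β · ∏_{i=1}^m (1 - x_i^{-2}) · ∏_{1≤i<j≤m} (1 - x_i/x_j)(1 - 1/(x_i x_j)). -/
import Mathlib

open scoped Classical

abbrev Lau (m : ℕ) := AddMonoidAlgebra ℤ (Fin m → ℤ)

noncomputable def mono {m : ℕ} (β : Fin m → ℤ) : Lau m := AddMonoidAlgebra.single β 1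

-- basic mono lemmas
lemma mono_mul {m : ℕ} (a b : Fin m → ℤ) : mono a * mono b = mono (a + b) := by
  simp [mono, AddMonoidAlgebra.single_mul_single]

lemma mono_zero {m : ℕ} : mono (0 : Fin m → ℤ) = 1 := rfl

lemma mono_prod {m : ℕ} {ι : Type*} (s : Finset ι) (f : ι → Fin m → ℤ) :
    ∏ i ∈ s, mono (f i) = mono (∑ i ∈ s, f i) := by
  induction s using Finset.cons_induction with
  | empty => simp [mono_zero]
  | cons a s ha ih => rw [Finset.prod_cons, Finset.sum_cons, ih, mono_mul]

lemma mono_pow {m : ℕ} (a : Fin m → ℤ) (n : ℕ) : mono a ^ n = mono (n • a) := by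
  induction n with
  | zero => simp [mono_zero]
  | succ k ih => rw [pow_succ, ih, mono_mul, succ_nsmul]

-- Chebyshev-like polynomials
noncomputable def cheb (R : Type*) [CommRing R] : ℕ → Polynomial R
  | 0 => 1
  | 1 => Polynomial.X
  | (n+2) => Polynomial.X * cheb R (n+1) - cheb R n

lemma cheb_monic_deg (R : Type*) [CommRing R] [Nontrivial R] :
    ∀ n, (cheb R n).Monic ∧ (cheb R n).natDegree = n
  | 0 => ⟨Polynomial.monic_one, by simp [cheb]⟩
  | 1 => ⟨Polynomial.monic_X, by simp [cheb]⟩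
  | (n+2) => by
    obtain ⟨h1m, h1d⟩ := cheb_monic_deg R (n+1)
    obtain ⟨h0m, h0d⟩ := cheb_monic_deg R n
    have hm : (Polynomial.X * cheb R (n+1)).Monic := Polynomial.monic_X.mul h1m
    have hd : (Polynomial.X * cheb R (n+1)).natDegree = n + 2 := by
      rw [Polynomial.monic_X.natDegree_mul h1m, Polynomial.natDegree_X, h1d]; omega
    have hlt : (cheb R n).degree < (Polynomial.X * cheb R (n+1)).degree := by
      rw [Polynomial.degree_eq_natDegree h0m.ne_zero,
        Polynomial.degree_eq_natDegree hm.ne_zero, hd, h0d]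
      exact_mod_cast by omega
    refine ⟨hm.sub_of_left hlt, ?_⟩
    rw [show cheb R (n+2) = Polynomial.X * cheb R (n+1) - cheb R n from rfl,
      Polynomial.natDegree_sub_eq_left_of_natDegree_lt, hd]
    omega

lemma cheb_eval {R : Type*} [CommRing R] (a b : R) (h : a * b = 1) :
    ∀ n, (a - b) * (cheb R n).eval (a + b) = a ^ (n+1) - b ^ (n+1)
  | 0 => by simp [cheb]
  | 1 => by simp [cheb]; ring
  | (n+2) => by
    have h1 := cheb_eval a b h (n+1)
    have h0 := cheb_eval a b h n
    rw [show cheb R (n+2) = Polynomial.X * cheb R (n+1) - cheb R n from rfl]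
    simp only [Polynomial.eval_sub, Polynomial.eval_mul, Polynomial.eval_X]
    have : (a - b) * ((a + b) * (cheb R (n+1)).eval (a+b) - (cheb R n).eval (a+b))
        = (a + b) * ((a - b) * (cheb R (n+1)).eval (a+b))
          - ((a - b) * (cheb R n).eval (a+b)) := by ring
    rw [this, h1, h0]
    ring_nf
    linear_combination (a ^ (n+1) - b ^ (n+1)) * h

theorem stmt6 (m : ℕ) (hm : 1 ≤ m) (β : Fin m → ℤ) :
    Matrix.det (Matrix.of fun i j : Fin m =>
        mono (Pi.single i (β i - ((i : ℤ) + 1) + ((j : ℤ) + 1)))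
          - mono (Pi.single i (β i - ((i : ℤ) + 1) - ((j : ℤ) + 1)))) =
      mono β * (∏ i : Fin m, (1 - mono (Pi.single i (-2 : ℤ)))) *
        ∏ i : Fin m, ∏ j ∈ Finset.Ioi i,
          ((1 - mono (Pi.single i (1 : ℤ) - Pi.single j 1)) *
            (1 - mono (-(Pi.single i (1 : ℤ)) - Pi.single j 1))) := by
  classical
  set a : Fin m → Lau m := fun i => mono (Pi.single i 1) with ha
  set b : Fin m → Lau m := fun i => mono (Pi.single i (-1)) with hb
  have hsingle_add : ∀ (i : Fin m) (x y : ℤ),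
      (Pi.single i x + Pi.single i y : Fin m → ℤ) = Pi.single i (x + y) := by
    intro i x y; funext k; by_cases h : k = i <;> simp [Pi.single_apply, h]
  have hab : ∀ i, a i * b i = 1 := by
    intro i
    rw [ha, hb, mono_mul, hsingle_add]
    norm_num [mono_zero]
  have hapow : ∀ (i : Fin m) (n : ℕ), a i ^ n = mono (Pi.single i (n : ℤ)) := by
    intro i n
    rw [ha, mono_pow]
    congr 1
    funext k; by_cases h : k = i <;> simp [Pi.single_apply, h]
  have hbpow : ∀ (i : Fin m) (n : ℕ), b i ^ n = mono (Pi.single i (-(n : ℤ))) := by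
    intro i n
    rw [hb, mono_pow]
    congr 1
    funext k; by_cases h : k = i <;> simp [Pi.single_apply, h]
  set v : Fin m → Lau m :=
    fun i => mono (Pi.single i (β i - (i : ℤ) - 1)) * (a i - b i) with hv
  set E : Matrix (Fin m) (Fin m) (Lau m) :=
    Matrix.of (fun i j : Fin m => (cheb (Lau m) (j : ℕ)).eval (a i + b i)) with hE
  have hM : (Matrix.of fun i j : Fin m =>
        mono (Pi.single i (β i - ((i : ℤ) + 1) + ((j : ℤ) + 1)))
          - mono (Pi.single i (β i - ((i : ℤ) + 1) - ((j : ℤ) + 1)))) =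
      Matrix.of (fun i j : Fin m => v i * E i j) := by
    ext i j
    simp only [Matrix.of_apply, hv, hE]
    rw [mul_assoc, cheb_eval (a i) (b i) (hab i) (j : ℕ), mul_sub,
      hapow, hbpow, mono_mul, mono_mul, hsingle_add, hsingle_add]
    congr 2 <;> push_cast <;> ring
  rw [hM, Matrix.det_mul_column]
  -- Vandermonde step
  have hnd : ∀ i : Fin m, (cheb (Lau m) (i : ℕ)).natDegree = (i : ℕ) :=
    fun i => (cheb_monic_deg (Lau m) i).2
  have hmon : ∀ i : Fin m, (cheb (Lau m) (i : ℕ)).Monic :=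
    fun i => (cheb_monic_deg (Lau m) i).1
  have hvdm : E.det = (Matrix.vandermonde (fun i => a i + b i)).det := by
    rw [Matrix.det_eval_matrixOfPolynomials_eq_det_vandermonde
      (fun i => a i + b i) (fun j : Fin m => cheb (Lau m) (j : ℕ)) hnd hmon]
  rw [hvdm, Matrix.det_vandermonde]
  -- factor each Vandermonde term
  have key : ∀ i j : Fin m, (a j + b j) - (a i + b i) =
      mono (Pi.single j 1) *
        ((1 - mono (Pi.single i (1 : ℤ) - Pi.single j 1)) *
          (1 - mono (-(Pi.single i (1 : ℤ)) - Pi.single j 1))) := by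
    intro i j
    have h1 : mono (Pi.single j 1) * mono (Pi.single i (1:ℤ) - Pi.single j 1) = a i := by
      rw [mono_mul, ha]; congr 1; abel
    have h2 : mono (Pi.single j 1) * mono (-(Pi.single i (1:ℤ)) - Pi.single j 1) = b i := by
      rw [mono_mul, hb]; congr 1
      funext k; by_cases hk : k = i <;> by_cases hk' : k = j <;>
        simp [Pi.single_apply, hk, hk'] <;> omega
    have h3 : mono (Pi.single i (1:ℤ) - Pi.single j 1) *
        mono (-(Pi.single i (1:ℤ)) - Pi.single j 1) = mono (Pi.single j (-2)) := by
      rw [mono_mul]; congr 1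
      funext k; by_cases hk : k = i <;> by_cases hk' : k = j <;>
        simp [Pi.single_apply, hk, hk'] <;> omega
    have h4 : mono (Pi.single j 1) * mono (Pi.single j (-2:ℤ)) = b j := by
      rw [mono_mul, hsingle_add, hb]; norm_num
    have haj : a j = mono (Pi.single j 1) := rfl
    linear_combination h1 + h2 - mono (Pi.single j 1) * h3 - h4
  simp only [key]
  -- split the products
  have habfac : ∀ i : Fin m, a i - b i =
      mono (Pi.single i 1) * (1 - mono (Pi.single i (-2:ℤ))) := by
    intro i
    rw [mul_sub, mul_one, mono_mul, hsingle_add, ha, hb]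
    norm_num
  simp only [hv, habfac, Finset.prod_mul_distrib, mono_prod]
  rw [← mul_assoc]
  have hmono : mono (∑ i : Fin m, Pi.single i (β i - (i:ℤ) - 1)) *
      mono (∑ i : Fin m, Pi.single i (1:ℤ)) *
      mono (∑ i : Fin m, ∑ j ∈ Finset.Ioi i, Pi.single j (1:ℤ)) = mono β := by
    rw [mono_mul, mono_mul]
    congr 1
    funext k
    simp only [Finset.sum_apply, Pi.add_apply, Pi.single_apply]
    have hsum1 : ∀ c : Fin m → ℤ, (∑ i : Fin m, if k = i then c i else 0) = c k := by
      intro c; simp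
    rw [hsum1 (fun i => β i - (i:ℤ) - 1), hsum1 (fun _ => (1:ℤ))]
    have hin : (∑ i : Fin m, ∑ j ∈ Finset.Ioi i, if k = j then (1:ℤ) else 0)
        = (k : ℤ) := by
      have : ∀ i : Fin m, (∑ j ∈ Finset.Ioi i, if k = j then (1:ℤ) else 0)
          = if i < k then 1 else 0 := by
        intro i
        rw [Finset.sum_ite_eq]
        simp [Finset.mem_Ioi]
      simp only [this]
      rw [Finset.sum_ite, Finset.sum_const, Finset.sum_const]
      have : Finset.univ.filter (fun i : Fin m => i < k) = Finset.Iio k := by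
        ext x; simp
      simp [this, Fin.card_Iio]
    rw [hin]
    ring
  rw [← hmono]
  ring
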